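/- Let A ∈ [0,1]^{2×2}, n ≥ 1, η > 0, and define Â ∈ [0,1/n]^{2n×2n} by Â_{ij} := (1/n)·A_{φ(i),φ(j)}, where φ(i) = 1 if i ≤ n and φ(i) = 2 if i > n. Let (x^t, y^t)_{t≥1} be the OFTRL iterates with the squared Euclidean norm regularizer R(x) = (1/2)Σ_i x_i² and step size η in the 2×2 zero-sum game A, and let (x̂^t, ŷ^t)_{t≥1} be the OFTRL iterates with the squared Euclidean norm regularizer and the same step size η in the 2n×2n zero-sum game Â. Then for every t ≥ 1 and all indices i, j ∈ {1,…,2n}: x̂^t_i = x^t[φ(i)]/n and ŷ^t_j = y^t[φ(j)]/n; in particular Σ_{i=1}^{n} x̂^t_i = x^t[1] and Σ_{j=1}^{n} ŷ^t_j = y^t[1]. -/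
import Mathlib


open Set Matrix Finset

noncomputable section

/-- The squared Euclidean norm regularizer on `ℝ^d`. -/
def sqEuclid {d : ℕ} (z : Fin d → ℝ) : ℝ := (1 / 2) * ∑ i, (z i) ^ 2

/-- The x-player's loss vectors `ℓ_x^t = B y^t` (with `ℓ_x^0 = 0`). -/
def lossX {m k : ℕ} (B : Matrix (Fin m) (Fin k) ℝ) (y : ℕ → Fin k → ℝ) (t : ℕ) :
    Fin m → ℝ :=
  if t = 0 then 0 else B.mulVec (y t)

/-- The y-player's loss vectors `ℓ_y^t = −Bᵀ x^t` (with `ℓ_y^0 = 0`). -/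
def lossY {m k : ℕ} (B : Matrix (Fin m) (Fin k) ℝ) (x : ℕ → Fin m → ℝ) (t : ℕ) :
    Fin k → ℝ :=
  if t = 0 then 0 else -(Bᵀ.mulVec (x t))

/-- `p` is the unique minimizer over the simplex of `⟨·, c⟩ + (1/η) R(·)`. -/
def IsArgminIter {d : ℕ} (η : ℝ) (R : (Fin d → ℝ) → ℝ) (c : Fin d → ℝ)
    (p : Fin d → ℝ) : Prop :=
  p ∈ stdSimplex ℝ (Fin d) ∧
  ∀ q ∈ stdSimplex ℝ (Fin d), q ≠ p →
    (∑ i, p i * c i) + (1 / η) * R p < (∑ i, q i * c i) + (1 / η) * R q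

/-- OFTRL dynamics with regularizers `Rm`, `Rk` and step size `η` in the zero-sum game `B`:
at each `t ≥ 1` the iterates minimize `⟨·, Σ_{τ=1}^{t−1} ℓ^τ + ℓ^{t−1}⟩ + (1/η) R(·)`. -/
def IsOFTRLGame {m k : ℕ} (η : ℝ) (Rm : (Fin m → ℝ) → ℝ) (Rk : (Fin k → ℝ) → ℝ)
    (B : Matrix (Fin m) (Fin k) ℝ) (x : ℕ → Fin m → ℝ) (y : ℕ → Fin k → ℝ) : Prop :=
  ∀ t : ℕ, 1 ≤ t →
    IsArgminIter η Rm
      (fun i => (∑ τ ∈ Finset.range t, lossX B y τ i) + lossX B y (t - 1) i) (x t) ∧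
    IsArgminIter η Rk
      (fun j => (∑ τ ∈ Finset.range t, lossY B x τ j) + lossY B x (t - 1) j) (y t)

/-- `φ(i) = 1` if `i ≤ n`, `φ(i) = 2` if `i > n` (0-indexed as `0` and `1`). -/
def phiDup (n : ℕ) (i : Fin (2 * n)) : Fin 2 := if (i : ℕ) < n then 0 else 1

/- ===================== auxiliary lemmas ===================== -/

lemma phiDup_eq_zero {n : ℕ} {i : Fin (2*n)} (h : (i:ℕ) < n) : phiDup n i = 0 := if_pos h

lemma phiDup_eq_one {n : ℕ} {i : Fin (2*n)} (h : ¬(i:ℕ) < n) : phiDup n i = 1 := if_neg h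

lemma isArgminIter_unique {d : ℕ} {η : ℝ} {R : (Fin d → ℝ) → ℝ} {c p p' : Fin d → ℝ}
    (h : IsArgminIter η R c p) (h' : IsArgminIter η R c p') : p = p' := by
  by_contra hne
  have h1 := h.2 p' h'.1 (fun e => hne e.symm)
  have h2 := h'.2 p h.1 hne
  linarith

lemma card_filter_lt (n : ℕ) :
    ((univ : Finset (Fin (2*n))).filter (fun i : Fin (2*n) => (i:ℕ) < n)).card = n := by
  have h : ((univ : Finset (Fin (2*n))).filter (fun i : Fin (2*n) => (i:ℕ) < n))
      = Finset.map (Fin.castLEEmb (by omega : n ≤ 2*n)) (univ : Finset (Fin n)) := by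
    ext i
    simp only [Finset.mem_filter, Finset.mem_univ, true_and, Finset.mem_map,
      Fin.castLEEmb_apply]
    constructor
    · intro h; exact ⟨⟨i, h⟩, by ext; simp⟩
    · rintro ⟨a, ha⟩
      have hv : ((Fin.castLE (by omega : n ≤ 2*n) a : Fin (2*n)) : ℕ) = (a : ℕ) := rfl
      rw [← ha]
      simpa [hv] using a.2
  rw [h, Finset.card_map, Finset.card_univ, Fintype.card_fin]

lemma card_filter_not_lt (n : ℕ) :
    ((univ : Finset (Fin (2*n))).filter (fun i : Fin (2*n) => ¬(i:ℕ) < n)).card = n := by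
  have h := Finset.card_filter_add_card_filter_not
    (s := (univ : Finset (Fin (2*n)))) (p := fun i : Fin (2*n) => (i:ℕ) < n)
  rw [card_filter_lt, Finset.card_univ, Fintype.card_fin] at h
  omega

lemma sum_split (n : ℕ) (f : Fin (2*n) → ℝ) :
    ∑ i, f i
      = (∑ i ∈ (univ : Finset (Fin (2*n))).filter (fun i : Fin (2*n) => (i:ℕ) < n), f i)
      + ∑ i ∈ (univ : Finset (Fin (2*n))).filter (fun i : Fin (2*n) => ¬(i:ℕ) < n), f i :=
  (Finset.sum_filter_add_sum_filter_not _ _ _).symm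

/-- Sums of functions factoring through `phiDup`. -/
lemma sum_comp_phi (n : ℕ) (f : Fin (2*n) → ℝ) (g : Fin 2 → ℝ)
    (h : ∀ i, f i = g (phiDup n i)) :
    ∑ i, f i = n * g 0 + n * g 1 := by
  have h1 : (∑ i ∈ (univ : Finset (Fin (2*n))).filter (fun i : Fin (2*n) => (i:ℕ) < n), f i)
      = ∑ _i ∈ (univ : Finset (Fin (2*n))).filter (fun i : Fin (2*n) => (i:ℕ) < n), g 0 :=
    Finset.sum_congr rfl (fun i hi => by
      rw [h i, phiDup_eq_zero (Finset.mem_filter.1 hi).2])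
  have h2 : (∑ i ∈ (univ : Finset (Fin (2*n))).filter (fun i : Fin (2*n) => ¬(i:ℕ) < n), f i)
      = ∑ _i ∈ (univ : Finset (Fin (2*n))).filter (fun i : Fin (2*n) => ¬(i:ℕ) < n), g 1 :=
    Finset.sum_congr rfl (fun i hi => by
      rw [h i, phiDup_eq_one (Finset.mem_filter.1 hi).2])
  rw [sum_split n f, h1, h2, Finset.sum_const, Finset.sum_const, card_filter_lt,
    card_filter_not_lt, nsmul_eq_mul, nsmul_eq_mul]

/-- Sums of products against functions factoring through `phiDup`. -/
lemma sum_mul_phi (n : ℕ) (f : Fin (2*n) → ℝ) (q : Fin (2*n) → ℝ) (g : Fin 2 → ℝ)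
    (h : ∀ i, f i = q i * g (phiDup n i)) :
    ∑ i, f i
      = (∑ i ∈ (univ : Finset (Fin (2*n))).filter (fun i : Fin (2*n) => (i:ℕ) < n), q i) * g 0
      + (∑ i ∈ (univ : Finset (Fin (2*n))).filter (fun i : Fin (2*n) => ¬(i:ℕ) < n), q i)
          * g 1 := by
  have h1 : (∑ i ∈ (univ : Finset (Fin (2*n))).filter (fun i : Fin (2*n) => (i:ℕ) < n), f i)
      = ∑ i ∈ (univ : Finset (Fin (2*n))).filter (fun i : Fin (2*n) => (i:ℕ) < n), q i * g 0 :=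
    Finset.sum_congr rfl (fun i hi => by
      rw [h i, phiDup_eq_zero (Finset.mem_filter.1 hi).2])
  have h2 : (∑ i ∈ (univ : Finset (Fin (2*n))).filter (fun i : Fin (2*n) => ¬(i:ℕ) < n), f i)
      = ∑ i ∈ (univ : Finset (Fin (2*n))).filter (fun i : Fin (2*n) => ¬(i:ℕ) < n), q i * g 1 :=
    Finset.sum_congr rfl (fun i hi => by
      rw [h i, phiDup_eq_one (Finset.mem_filter.1 hi).2])
  rw [sum_split n f, h1, h2, ← Finset.sum_mul, ← Finset.sum_mul]

lemma variance_key {ι : Type*} (S : Finset ι) (q : ι → ℝ) {n : ℕ} (hc : S.card = n)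
    (hn : 1 ≤ n) :
    ∑ i ∈ S, (q i - (∑ j ∈ S, q j)/n)^2
      = ∑ i ∈ S, (q i)^2 - (∑ j ∈ S, q j)^2 / n := by
  have hn0 : (0:ℝ) < n := by exact_mod_cast hn
  have hnne : (n:ℝ) ≠ 0 := ne_of_gt hn0
  have expand : ∀ i ∈ S, (q i - (∑ j ∈ S, q j)/n)^2
      = (q i)^2 - (2*((∑ j ∈ S, q j)/n)) * q i + ((∑ j ∈ S, q j)/n)^2 :=
    fun i _ => by ring
  rw [Finset.sum_congr rfl expand, Finset.sum_add_distrib, Finset.sum_sub_distrib,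
    ← Finset.mul_sum, Finset.sum_const, hc, nsmul_eq_mul]
  field_simp
  ring

lemma sum_sq_fiber {ι : Type*} (S : Finset ι) (q : ι → ℝ) {n : ℕ} (hc : S.card = n)
    (hn : 1 ≤ n) :
    (∑ i ∈ S, q i)^2 / n ≤ ∑ i ∈ S, (q i)^2 := by
  have key := variance_key S q hc hn
  have h0 : (0:ℝ) ≤ ∑ i ∈ S, (q i - (∑ j ∈ S, q j)/n)^2 :=
    Finset.sum_nonneg (fun i _ => sq_nonneg _)
  linarith

lemma sum_sq_fiber_strict {ι : Type*} (S : Finset ι) (q : ι → ℝ) {n : ℕ} (hc : S.card = n)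
    (hn : 1 ≤ n) {i : ι} (hi : i ∈ S) (hne : q i ≠ (∑ j ∈ S, q j)/n) :
    (∑ i ∈ S, q i)^2 / n < ∑ i ∈ S, (q i)^2 := by
  have key := variance_key S q hc hn
  have h0 : (0:ℝ) < ∑ i ∈ S, (q i - (∑ j ∈ S, q j)/n)^2 := by
    refine Finset.sum_pos' (fun i _ => sq_nonneg _) ⟨i, hi, ?_⟩
    have hne' : q i - (∑ j ∈ S, q j)/n ≠ 0 := sub_ne_zero.2 hne
    positivity
  linarith

/-- Transfer of the OFTRL argmin from the base 2×2 game to the duplicated game. -/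
lemma transfer (n : ℕ) (hn : 1 ≤ n) (η : ℝ) (hη : 0 < η) (c : Fin 2 → ℝ) (p : Fin 2 → ℝ)
    (hp : IsArgminIter η sqEuclid c p) (chat : Fin (2*n) → ℝ)
    (hcc : ∀ i, chat i = (1/(n:ℝ)) * c (phiDup n i)) :
    IsArgminIter η sqEuclid chat (fun i => p (phiDup n i) / n) := by
  have hn0 : (0:ℝ) < n := by exact_mod_cast hn
  have hnne : (n:ℝ) ≠ 0 := ne_of_gt hn0
  have hηinv : (0:ℝ) < 1/η := by positivity
  constructor
  · refine ⟨fun i => div_nonneg (hp.1.1 _) (le_of_lt hn0), ?_⟩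
    rw [sum_comp_phi n _ (fun k => p k / (n:ℝ)) (fun i => rfl)]
    have hsum := hp.1.2
    rw [Fin.sum_univ_two] at hsum
    field_simp
    linarith
  · intro q hq hqne
    set S0 := (univ : Finset (Fin (2*n))).filter (fun i : Fin (2*n) => (i:ℕ) < n) with hS0
    set S1 := (univ : Finset (Fin (2*n))).filter (fun i : Fin (2*n) => ¬(i:ℕ) < n) with hS1
    set s0 := ∑ i ∈ S0, q i with hs0
    set s1 := ∑ i ∈ S1, q i with hs1
    set qbar : Fin 2 → ℝ := ![s0, s1] with hqbar
    have hqb0 : qbar 0 = s0 := rfl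
    have hqb1 : qbar 1 = s1 := rfl
    have hqbar_mem : qbar ∈ stdSimplex ℝ (Fin 2) := by
      constructor
      · intro k
        fin_cases k
        · show (0:ℝ) ≤ s0
          exact Finset.sum_nonneg (fun i _ => hq.1 i)
        · show (0:ℝ) ≤ s1
          exact Finset.sum_nonneg (fun i _ => hq.1 i)
      · rw [Fin.sum_univ_two, hqb0, hqb1, hs0, hs1, hS0, hS1, ← sum_split]
        exact hq.2
    -- value of the objective at the duplicated point
    have e1 : (∑ i, (p (phiDup n i) / (n:ℝ)) * chat i)
          + (1/η) * sqEuclid (fun i : Fin (2*n) => p (phiDup n i) / (n:ℝ))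
        = (1/(n:ℝ)) * ((∑ k, p k * c k) + (1/η) * sqEuclid p) := by
      have t1 : (∑ i, (p (phiDup n i) / (n:ℝ)) * chat i)
          = n * ((p 0 / (n:ℝ)) * ((1/(n:ℝ)) * c 0))
            + n * ((p 1 / (n:ℝ)) * ((1/(n:ℝ)) * c 1)) :=
        sum_comp_phi n _ (fun k => (p k / (n:ℝ)) * ((1/(n:ℝ)) * c k)) (fun i => by rw [hcc])
      have t2 : (∑ i : Fin (2*n), (p (phiDup n i) / (n:ℝ))^2)
          = n * (p 0 / (n:ℝ))^2 + n * (p 1 / (n:ℝ))^2 :=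
        sum_comp_phi n _ (fun k => (p k / (n:ℝ))^2) (fun i => rfl)
      simp only [sqEuclid]
      rw [t1, t2, Fin.sum_univ_two, Fin.sum_univ_two]
      field_simp
    -- linear part at q
    have e2 : (∑ i, q i * chat i) = (1/(n:ℝ)) * (∑ k, qbar k * c k) := by
      have t1 : (∑ i, q i * chat i) = s0 * ((1/(n:ℝ)) * c 0) + s1 * ((1/(n:ℝ)) * c 1) :=
        sum_mul_phi n _ q (fun k => (1/(n:ℝ)) * c k) (fun i => by rw [hcc])
      rw [t1, Fin.sum_univ_two, hqb0, hqb1]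
      ring
    -- regularizer comparison
    have eq5 : sqEuclid q = (1/2) * ((∑ i ∈ S0, (q i)^2) + ∑ i ∈ S1, (q i)^2) := by
      simp only [sqEuclid]
      rw [hS0, hS1, sum_split n (fun i => (q i)^2)]
    have eq6 : (1/(n:ℝ)) * sqEuclid qbar = (1/2) * (s0^2/(n:ℝ) + s1^2/(n:ℝ)) := by
      simp only [sqEuclid]
      rw [Fin.sum_univ_two, hqb0, hqb1]
      ring
    have hc0 : S0.card = n := card_filter_lt n
    have hc1 : S1.card = n := card_filter_not_lt n
    have cauchy0 : s0^2/(n:ℝ) ≤ ∑ i ∈ S0, (q i)^2 := sum_sq_fiber S0 q hc0 hn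
    have cauchy1 : s1^2/(n:ℝ) ≤ ∑ i ∈ S1, (q i)^2 := sum_sq_fiber S1 q hc1 hn
    by_cases hcase : qbar = p
    · -- strict Cauchy–Schwarz in some fiber
      have hex : ∃ i, q i ≠ p (phiDup n i) / n := by
        by_contra hall
        push_neg at hall
        exact hqne (funext hall)
      obtain ⟨i, hi⟩ := hex
      have hstrict : (1/(n:ℝ)) * sqEuclid qbar < sqEuclid q := by
        by_cases hin : (i:ℕ) < n
        · have hmem : i ∈ S0 := Finset.mem_filter.2 ⟨Finset.mem_univ _, hin⟩
          have hne' : q i ≠ s0 / n := by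
            rwa [phiDup_eq_zero hin, ← hcase, hqb0] at hi
          have hlt := sum_sq_fiber_strict S0 q hc0 hn hmem hne'
          rw [← hs0] at hlt
          rw [eq5, eq6]
          linarith
        · have hmem : i ∈ S1 := Finset.mem_filter.2 ⟨Finset.mem_univ _, hin⟩
          have hne' : q i ≠ s1 / n := by
            rwa [phiDup_eq_one hin, ← hcase, hqb1] at hi
          have hlt := sum_sq_fiber_strict S1 q hc1 hn hmem hne'
          rw [← hs1] at hlt
          rw [eq5, eq6]
          linarith
      have step : (1/η) * ((1/(n:ℝ)) * sqEuclid qbar) < (1/η) * sqEuclid q :=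
        mul_lt_mul_of_pos_left hstrict hηinv
      have ep : (∑ k, qbar k * c k) = ∑ k, p k * c k := by rw [hcase]
      calc (∑ i, (p (phiDup n i) / (n:ℝ)) * chat i)
            + (1/η) * sqEuclid (fun i : Fin (2*n) => p (phiDup n i) / (n:ℝ))
          = (1/(n:ℝ)) * ((∑ k, p k * c k) + (1/η) * sqEuclid p) := e1
        _ = (1/(n:ℝ)) * (∑ k, p k * c k) + (1/η) * ((1/(n:ℝ)) * sqEuclid p) := by ring
        _ < (1/(n:ℝ)) * (∑ k, p k * c k) + (1/η) * sqEuclid q := by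
            rw [← hcase]
            linarith
        _ = (∑ i, q i * chat i) + (1/η) * sqEuclid q := by rw [e2, ep]
    · have hsmall := hp.2 qbar hqbar_mem hcase
      have hmono : (1/(n:ℝ)) * sqEuclid qbar ≤ sqEuclid q := by
        rw [eq5, eq6]
        linarith
      have step2 : (1/η) * ((1/(n:ℝ)) * sqEuclid qbar) ≤ (1/η) * sqEuclid q :=
        mul_le_mul_of_nonneg_left hmono (le_of_lt hηinv)
      have step1 : (1/(n:ℝ)) * ((∑ k, p k * c k) + (1/η) * sqEuclid p)
          < (1/(n:ℝ)) * ((∑ k, qbar k * c k) + (1/η) * sqEuclid qbar) :=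
        mul_lt_mul_of_pos_left hsmall (by positivity)
      calc (∑ i, (p (phiDup n i) / (n:ℝ)) * chat i)
            + (1/η) * sqEuclid (fun i : Fin (2*n) => p (phiDup n i) / (n:ℝ))
          = (1/(n:ℝ)) * ((∑ k, p k * c k) + (1/η) * sqEuclid p) := e1
        _ < (1/(n:ℝ)) * ((∑ k, qbar k * c k) + (1/η) * sqEuclid qbar) := step1
        _ = (1/(n:ℝ)) * (∑ k, qbar k * c k) + (1/η) * ((1/(n:ℝ)) * sqEuclid qbar) := by ring
        _ ≤ (1/(n:ℝ)) * (∑ k, qbar k * c k) + (1/η) * sqEuclid q := by linarith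
        _ = (∑ i, q i * chat i) + (1/η) * sqEuclid q := by rw [e2]

/-- for the squared Euclidean norm regularizer, the OFTRL dynamics on the
rescaled duplicated game `Â_{ij} = (1/n)·A_{φ(i)φ(j)}` are equivalent to those on `A`:
`x̂^t_i = x^t[φ(i)]/n` and `ŷ^t_j = y^t[φ(j)]/n`. -/
theorem oftrl_euclidean_duplication
    (n : ℕ) (hn : 1 ≤ n) (η : ℝ) (hη : 0 < η)
    (A : Matrix (Fin 2) (Fin 2) ℝ) (hA : ∀ i j, A i j ∈ Set.Icc (0 : ℝ) 1)
    (Ahat : Matrix (Fin (2 * n)) (Fin (2 * n)) ℝ)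
    (hAhat : ∀ i j, Ahat i j = (1 / (n : ℝ)) * A (phiDup n i) (phiDup n j))
    (x y : ℕ → Fin 2 → ℝ)
    (hxy : IsOFTRLGame η sqEuclid sqEuclid A x y)
    (xhat yhat : ℕ → Fin (2 * n) → ℝ)
    (hhat : IsOFTRLGame η sqEuclid sqEuclid Ahat xhat yhat) :
    ∀ t : ℕ, 1 ≤ t →
      (∀ i : Fin (2 * n), xhat t i = x t (phiDup n i) / n) ∧
      (∀ j : Fin (2 * n), yhat t j = y t (phiDup n j) / n) ∧
      (∑ i ∈ Finset.univ.filter (fun i : Fin (2 * n) => (i : ℕ) < n), xhat t i) = x t 0 ∧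
      (∑ j ∈ Finset.univ.filter (fun j : Fin (2 * n) => (j : ℕ) < n), yhat t j) = y t 0 := by
  have hn0 : (0:ℝ) < n := by exact_mod_cast hn
  have hnne : (n:ℝ) ≠ 0 := ne_of_gt hn0
  -- main induction
  have key : ∀ t : ℕ, 1 ≤ t →
      (∀ i, xhat t i = x t (phiDup n i) / n) ∧ (∀ j, yhat t j = y t (phiDup n j) / n) := by
    intro t
    induction t using Nat.strong_induction_on with
    | _ t IH =>
      intro ht
      -- loss transfer for all τ < t
      have hlx : ∀ τ < t, ∀ i, lossX Ahat yhat τ i = (1/(n:ℝ)) * lossX A y τ (phiDup n i) := by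
        intro τ hτ i
        rcases Nat.eq_zero_or_pos τ with h0 | h1
        · subst h0; simp [lossX]
        · have hy := (IH τ hτ h1).2
          have hτ0 : τ ≠ 0 := Nat.pos_iff_ne_zero.1 h1
          simp only [lossX, if_neg hτ0, Matrix.mulVec, dotProduct]
          have t1 : (∑ j, Ahat i j * yhat τ j)
              = n * ((1/(n:ℝ)) * A (phiDup n i) 0 * (y τ 0 / n))
                + n * ((1/(n:ℝ)) * A (phiDup n i) 1 * (y τ 1 / n)) :=
            sum_comp_phi n _ (fun k => (1/(n:ℝ)) * A (phiDup n i) k * (y τ k / n))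
              (fun j => by rw [hAhat, hy])
          rw [t1, Fin.sum_univ_two]
          field_simp
      have hly : ∀ τ < t, ∀ j, lossY Ahat xhat τ j = (1/(n:ℝ)) * lossY A x τ (phiDup n j) := by
        intro τ hτ j
        rcases Nat.eq_zero_or_pos τ with h0 | h1
        · subst h0; simp [lossY]
        · have hx := (IH τ hτ h1).1
          have hτ0 : τ ≠ 0 := Nat.pos_iff_ne_zero.1 h1
          simp only [lossY, if_neg hτ0, Matrix.mulVec, dotProduct, Pi.neg_apply,
            Matrix.transpose_apply]
          have t1 : (∑ i, Ahat i j * xhat τ i)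
              = n * ((1/(n:ℝ)) * A 0 (phiDup n j) * (x τ 0 / n))
                + n * ((1/(n:ℝ)) * A 1 (phiDup n j) * (x τ 1 / n)) :=
            sum_comp_phi n _ (fun k => (1/(n:ℝ)) * A k (phiDup n j) * (x τ k / n))
              (fun i => by rw [hAhat, hx])
          rw [t1, Fin.sum_univ_two]
          field_simp
      have ht1 : t - 1 < t := by omega
      -- cost transfer
      have hcx : ∀ i, (∑ τ ∈ Finset.range t, lossX Ahat yhat τ i) + lossX Ahat yhat (t-1) i
          = (1/(n:ℝ)) * ((∑ τ ∈ Finset.range t, lossX A y τ (phiDup n i))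
              + lossX A y (t-1) (phiDup n i)) := by
        intro i
        rw [Finset.sum_congr rfl (fun τ hτ => hlx τ (Finset.mem_range.1 hτ) i),
          hlx (t-1) ht1 i, ← Finset.mul_sum]
        ring
      have hcy : ∀ j, (∑ τ ∈ Finset.range t, lossY Ahat xhat τ j) + lossY Ahat xhat (t-1) j
          = (1/(n:ℝ)) * ((∑ τ ∈ Finset.range t, lossY A x τ (phiDup n j))
              + lossY A x (t-1) (phiDup n j)) := by
        intro j
        rw [Finset.sum_congr rfl (fun τ hτ => hly τ (Finset.mem_range.1 hτ) j),
          hly (t-1) ht1 j, ← Finset.mul_sum]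
        ring
      have hx1 : xhat t = fun i => x t (phiDup n i) / n :=
        isArgminIter_unique (hhat t ht).1
          (transfer n hn η hη
            (fun k => (∑ τ ∈ Finset.range t, lossX A y τ k) + lossX A y (t-1) k)
            (x t) (hxy t ht).1 _ hcx)
      have hy1 : yhat t = fun j => y t (phiDup n j) / n :=
        isArgminIter_unique (hhat t ht).2
          (transfer n hn η hη
            (fun k => (∑ τ ∈ Finset.range t, lossY A x τ k) + lossY A x (t-1) k)
            (y t) (hxy t ht).2 _ hcy)
      exact ⟨fun i => congrFun hx1 i, fun j => congrFun hy1 j⟩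
  intro t ht
  obtain ⟨hx1, hy1⟩ := key t ht
  refine ⟨hx1, hy1, ?_, ?_⟩
  · rw [Finset.sum_congr rfl (fun i hi => by
      rw [hx1 i, phiDup_eq_zero (Finset.mem_filter.1 hi).2]),
      Finset.sum_const, card_filter_lt, nsmul_eq_mul]
    field_simp
  · rw [Finset.sum_congr rfl (fun j hj => by
      rw [hy1 j, phiDup_eq_zero (Finset.mem_filter.1 hj).2]),
      Finset.sum_const, card_filter_lt, nsmul_eq_mul]
    field_simp

end
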